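/- arXiv:1406.6110 — 5 statements merged into one kernel-verified Lean document; each statement's English description precedes it below -/
import Mathlib

section
/- Fix τ with 1/2 ≤ τ < 1 and K ≥ 0, and let p(N) = sqrt((N + K + Nτ + 1)² - 4τN(N+1)). Then p(N) ≤ (1-τ)N + (1 + K - τ + Kτ)/(1-τ) for all N ≥ 0. -/
theorem p_upper_bound_b2 (τ K : ℝ) (hτ1 : 1/2 ≤ τ) (hτ2 : τ < 1) (hK : 0 ≤ K)
    (N : ℝ) (hN : 0 ≤ N) :
    Real.sqrt ((N + K + N * τ + 1)^2 - 4 * τ * N * (N + 1))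
      ≤ (1 - τ) * N + (1 + K - τ + K * τ) / (1 - τ) := by
  have h1 : (0:ℝ) < 1 - τ := by linarith
  have hB : 0 ≤ (1 - τ) * N + (1 + K - τ + K * τ) / (1 - τ) := by
    have : 0 ≤ (1 + K - τ + K * τ) / (1 - τ) := by
      apply div_nonneg _ h1.le
      nlinarith
    nlinarith
  rw [show (1 - τ) * N + (1 + K - τ + K * τ) / (1 - τ)
      = Real.sqrt (((1 - τ) * N + (1 + K - τ + K * τ) / (1 - τ))^2) from
      (Real.sqrt_sq hB).symm]
  apply Real.sqrt_le_sqrt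
  have key : ((1 - τ) * N + (1 + K - τ + K * τ) / (1 - τ))^2 * (1 - τ)^2
      ≥ ((N + K + N * τ + 1)^2 - 4 * τ * N * (N + 1)) * (1 - τ)^2 := by
    have hd : (1 + K - τ + K * τ) / (1 - τ) * (1 - τ) = 1 + K - τ + K * τ :=
      div_mul_cancel₀ _ h1.ne'
    have heq : ((1 - τ) * N + (1 + K - τ + K * τ) / (1 - τ))^2 * (1 - τ)^2
        = ((1 - τ)^2 * N + (1 + K - τ + K * τ))^2 := by
      have : ((1 - τ) * N + (1 + K - τ + K * τ) / (1 - τ)) * (1 - τ)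
          = (1 - τ)^2 * N + (1 + K - τ + K * τ) := by
        rw [add_mul, hd]; ring
      rw [← mul_pow, this]
    rw [heq]
    nlinarith [mul_nonneg (mul_nonneg hK (by linarith : (0:ℝ) ≤ τ)) (by linarith : (0:ℝ) ≤ 2 + 2*K - 2*τ)]
  have h2 : (0:ℝ) < (1 - τ)^2 := by positivity
  nlinarith [key]
end

section
/- Fix τ with 1/2 ≤ τ < 1 and K ≥ 0. Define η = τN + K, p(N) = sqrt((N + K + Nτ + 1)² - 4τN(N+1)), and ℓ = (p - η + N - 1)/2. Then η ≥ ℓ for all N ≥ 0, i.e. (1 - N + 3K + 3Nτ - p)/2 ≥ 0. -/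
theorem eta_ge_ell (τ K : ℝ) (hτ1 : 1/2 ≤ τ) (hτ2 : τ < 1) (hK : 0 ≤ K)
    (N : ℝ) (hN : 0 ≤ N) :
    (Real.sqrt ((N + K + N * τ + 1)^2 - 4 * τ * N * (N + 1))
        - (τ * N + K) + N - 1) / 2 ≤ τ * N + K ∧
    0 ≤ (1 - N + 3 * K + 3 * N * τ
        - Real.sqrt ((N + K + N * τ + 1)^2 - 4 * τ * N * (N + 1))) / 2 := by
  set A := (N + K + N * τ + 1)^2 - 4 * τ * N * (N + 1) with hA
  set B := 1 - N + 3 * K + 3 * N * τ with hB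
  have hB0 : 0 ≤ B := by nlinarith
  have h2τ : (0:ℝ) ≤ 2*τ - 1 := by linarith
  have hτ0 : (0:ℝ) ≤ τ := by linarith
  have hAB : A ≤ B ^ 2 := by
    nlinarith [mul_nonneg hK hK, mul_nonneg (mul_nonneg hK hN) h2τ,
      mul_nonneg hN h2τ, mul_nonneg (mul_nonneg (mul_nonneg hN hN) hτ0) h2τ]
  have hs : Real.sqrt A ≤ B := by
    calc Real.sqrt A ≤ Real.sqrt (B ^ 2) := Real.sqrt_le_sqrt hAB
    _ = B := by rw [Real.sqrt_sq hB0]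
  constructor <;> linarith
end

section
/- Fix τ > 1 and N ≥ 0. Then τ·log((1+N)τ/((1+N)τ - 1)) - (τ-1)·log(((1+N)τ - N)/((1+N)τ - 1 - N)) > 0. -/
/-! Write `a = (1 + N) τ`. The elementary bounds `(x - y) / x < log (x / y) < (x - y) / y` give
`τ log (a / (a - 1)) > τ / a` and `(τ - 1) log ((a - N) / (a - N - 1)) < (τ - 1) / (a - N - 1)`,
and both right-hand sides equal `1 / (1 + N)` because `a - N - 1 = (1 + N)(τ - 1)`. -/

namespace Real

variable {x y : ℝ}

lemma log_div_lt_sub_div (hx : 0 < x) (hy : 0 < y) (hxy : x ≠ y) :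
    log (x / y) < (x - y) / y := by
  have hne : x / y ≠ 1 := fun h ↦ hxy ((div_eq_one_iff_eq hy.ne').mp h)
  calc log (x / y) < x / y - 1 := log_lt_sub_one_of_pos (div_pos hx hy) hne
    _ = (x - y) / y := by field_simp

lemma sub_div_lt_log_div (hx : 0 < x) (hy : 0 < y) (hxy : x ≠ y) :
    (x - y) / x < log (x / y) := by
  have h := log_div_lt_sub_div hy hx hxy.symm
  rw [← inv_div y x, log_inv]
  linarith [show (y - x) / x = -((x - y) / x) by ring]

end Real

theorem amp_K0_derivative_pos (τ : ℝ) (hτ : 1 < τ) (N : ℝ) (hN : 0 ≤ N) :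
    0 < τ * Real.log ((1 + N) * τ / ((1 + N) * τ - 1))
        - (τ - 1) * Real.log (((1 + N) * τ - N) / ((1 + N) * τ - 1 - N)) := by
  set a := (1 + N) * τ with ha
  have h1N : 0 < 1 + N := by linarith
  have hτ1 : 0 < τ - 1 := by linarith
  have hgap : a - N - 1 = (1 + N) * (τ - 1) := by ring
  have hgap_pos : 0 < a - N - 1 := by rw [hgap]; exact mul_pos h1N hτ1
  have lower : 1 / (1 + N) < τ * Real.log (a / (a - 1)) :=
    calc 1 / (1 + N) = τ * ((a - (a - 1)) / a) := by rw [sub_sub_cancel, ha]; field_simp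
      _ < τ * Real.log (a / (a - 1)) := mul_lt_mul_of_pos_left
          (Real.sub_div_lt_log_div (by linarith) (by linarith) (by linarith)) (by linarith)
  have upper : (τ - 1) * Real.log ((a - N) / (a - N - 1)) < 1 / (1 + N) :=
    calc (τ - 1) * Real.log ((a - N) / (a - N - 1))
        < (τ - 1) * ((a - N - (a - N - 1)) / (a - N - 1)) := mul_lt_mul_of_pos_left
          (Real.log_div_lt_sub_div (by linarith) hgap_pos (by linarith)) hτ1
      _ = 1 / (1 + N) := by rw [sub_sub_cancel, hgap]; field_simp [hτ1.ne']
  rw [show a - 1 - N = a - N - 1 by ring]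
  linarith
end

section
/- Fix 1/2 ≤ τ < 1, K > 0, N > 0. With p = sqrt((N + K + Nτ + 1)² - 4τN(N+1)), q = K + N + 2KN - Nτ, F = (1 + q - p)/(2p), h = (1/2)(-1 + τ + (1 + K + N + (-1 + K - 2N)τ + Nτ²)/p), ℓ = (p - (τ-1)N - K - 1)/2, ∂h/∂K = τ(q+1)/p³, ∂F/∂K = N(1+N)((-1 + N(-1+τ))(-1+τ) + K(1+τ))/p³, ∂ℓ/∂K = (1 + K + N + Nτ - p)/(2p), the identity 2F/(2F+1) = (h/(∂h/∂K))·(∂F/∂K)/(1+F) + (1-τ)·(F/(∂h/∂K))·(∂ℓ/∂K)/((1+ℓ)ℓ) holds. -/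
/-!
Write `u = 1 - τ`, `b = K + 1 - uN` and `M = N(1 + N)K(K + u)`. The discriminant under the
square root is `b² + 4N(K + u)`, and both `F` and `ℓ` satisfy quadratic equations with
constant term built from `M`: `F(1 + F)p² = M`, while `ℓ(ℓ + b) = N(K + u)` and
`(1 + ℓ)(ℓ + b - 1) = (1 + N)K`. Using these to eliminate `1 / (1 + F)` and `1 / (ℓ(1 + ℓ))`,
both terms on the right acquire the common factor `F / (∂h/∂K · M)`, and the identity reduces
to a polynomial identity in `p` that holds modulo `p² = b² + 4N(K + u)`.
-/

namespace LossyChannel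

variable {τ K N p : ℝ}

lemma disc_eq (τ K N : ℝ) :
    (N + K + N * τ + 1)^2 - 4 * τ * N * (N + 1)
      = (K + 1 - (1 - τ) * N)^2 + 4 * N * (K + 1 - τ) := by
  ring

lemma disc_pos (hK : 0 < K) (hN : 0 < N) (hτ : τ < 1) :
    0 < (N + K + N * τ + 1)^2 - 4 * τ * N * (N + 1) := by
  rw [disc_eq]
  have : 0 < N * (K + 1 - τ) := mul_pos hN (by linarith)
  nlinarith [sq_nonneg (K + 1 - (1 - τ) * N)]

lemma two_mul_F_add_one {q F : ℝ} (hp0 : p ≠ 0) (hF : F = (1 + q - p) / (2 * p)) :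
    2 * F + 1 = (1 + q) / p := by
  rw [hF]
  field_simp
  ring

lemma F_mul_one_add_F_mul_sq {q F : ℝ}
    (hp : p^2 = (N + K + N * τ + 1)^2 - 4 * τ * N * (N + 1)) (hp0 : p ≠ 0)
    (hq : q = K + N + 2 * K * N - N * τ) (hF : F = (1 + q - p) / (2 * p)) :
    F * (1 + F) * p^2 = N * (1 + N) * K * (K + 1 - τ) := by
  subst hq hF
  field_simp
  linear_combination (-1 : ℝ) * hp

lemma ℓ_mul_ℓ_add_eq {ℓ : ℝ} (hp : p^2 = (N + K + N * τ + 1)^2 - 4 * τ * N * (N + 1))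
    (hℓ : ℓ = (p - (τ - 1) * N - K - 1) / 2) :
    ℓ * (ℓ + K + 1 - (1 - τ) * N) = N * (K + 1 - τ) := by
  subst hℓ
  linear_combination (1 / 4 : ℝ) * hp

lemma one_add_ℓ_mul_ℓ_add_eq {ℓ : ℝ} (hp : p^2 = (N + K + N * τ + 1)^2 - 4 * τ * N * (N + 1))
    (hℓ : ℓ = (p - (τ - 1) * N - K - 1) / 2) :
    (1 + ℓ) * (ℓ + K - (1 - τ) * N) = (1 + N) * K := by
  subst hℓ
  linear_combination (1 / 4 : ℝ) * hp

lemma one_add_ℓ_mul_ℓ_mul_eq {ℓ : ℝ}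
    (hp : p^2 = (N + K + N * τ + 1)^2 - 4 * τ * N * (N + 1))
    (hℓ : ℓ = (p - (τ - 1) * N - K - 1) / 2) :
    (1 + ℓ) * ℓ * ((ℓ + K + 1 - (1 - τ) * N) * (ℓ + K - (1 - τ) * N))
      = N * (1 + N) * K * (K + 1 - τ) := by
  linear_combination (1 + ℓ) * (ℓ + K - (1 - τ) * N) * ℓ_mul_ℓ_add_eq hp hℓ
    + N * (K + 1 - τ) * one_add_ℓ_mul_ℓ_add_eq hp hℓ

lemma key_identity_lossy_reduced {ℓ h dFdK dℓdK : ℝ}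
    (hp : p^2 = (N + K + N * τ + 1)^2 - 4 * τ * N * (N + 1)) (hp0 : p ≠ 0)
    (hh : h = (1/2) * (-1 + τ + (1 + K + N + (-1 + K - 2 * N) * τ + N * τ^2) / p))
    (hℓ : ℓ = (p - (τ - 1) * N - K - 1) / 2)
    (hdF : dFdK = N * (1 + N) * ((-1 + N * (-1 + τ)) * (-1 + τ) + K * (1 + τ)) / p^3)
    (hdℓ : dℓdK = (1 + K + N + N * τ - p) / (2 * p)) :
    h * dFdK * p^2 + (1 - τ) * dℓdK * (ℓ + K + 1 - (1 - τ) * N) * (ℓ + K - (1 - τ) * N)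
      = 2 * τ * (N * (1 + N) * K * (K + 1 - τ)) / p^2 := by
  -- `8 p²` times the claim; the coefficient below is the quotient on division by `p² - disc`.
  have cleared :
      4 * ((1 + K + N + (-1 + K - 2 * N) * τ + N * τ^2) - (1 - τ) * p) * (N * (1 + N))
          * (1 + K + N + (-1 + K - 2 * N) * τ + N * τ^2)
        + (1 - τ) * p * (1 + K + N + N * τ - p) * (p + K + 1 - (1 - τ) * N)
          * (p + K - (1 - τ) * N - 1)
      = 16 * τ * (N * (1 + N) * K * (K + 1 - τ)) := by
    linear_combination
      (1 - τ) * (-p^2 + p * (1 + N * (3 - τ) - K) - 4 * N * (1 + N) * (1 - τ)) * hp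
  subst hh hℓ hdF hdℓ
  field_simp
  linear_combination cleared

end LossyChannel

open LossyChannel in
theorem key_identity_lossy (τ K N : ℝ) (hτ1 : 1/2 ≤ τ) (hτ2 : τ < 1)
    (hK : 0 < K) (hN : 0 < N)
    (p q F h ℓ dhdK dFdK dℓdK : ℝ)
    (hp : p = Real.sqrt ((N + K + N * τ + 1)^2 - 4 * τ * N * (N + 1)))
    (hq : q = K + N + 2 * K * N - N * τ)
    (hF : F = (1 + q - p) / (2 * p))
    (hh : h = (1/2) * (-1 + τ + (1 + K + N + (-1 + K - 2 * N) * τ + N * τ^2) / p))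
    (hℓ : ℓ = (p - (τ - 1) * N - K - 1) / 2)
    (hdh : dhdK = τ * (q + 1) / p^3)
    (hdF : dFdK = N * (1 + N) * ((-1 + N * (-1 + τ)) * (-1 + τ) + K * (1 + τ)) / p^3)
    (hdℓ : dℓdK = (1 + K + N + N * τ - p) / (2 * p)) :
    2 * F / (2 * F + 1)
      = (h / dhdK) * (dFdK / (1 + F))
        + (1 - τ) * (F / dhdK) * (dℓdK / ((1 + ℓ) * ℓ)) := by
  have hτ : τ ≠ 0 := (by linarith : (0 : ℝ) < τ).ne'
  have hdisc := disc_pos hK hN hτ2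
  have hp0 : 0 < p := hp ▸ Real.sqrt_pos.mpr hdisc
  have hp2 : p^2 = _ := hp ▸ Real.sq_sqrt hdisc.le
  have hq1 : 0 < 1 + q := by rw [hq]; nlinarith
  have hcore := key_identity_lossy_reduced hp2 hp0.ne' hh hℓ hdF hdℓ
  have hFF := F_mul_one_add_F_mul_sq hp2 hp0.ne' hq hF
  have hℓℓ := one_add_ℓ_mul_ℓ_mul_eq hp2 hℓ
  set M := N * (1 + N) * K * (K + 1 - τ)
  have hM : M ≠ 0 := (mul_pos (mul_pos (mul_pos hN (by linarith)) hK) (by linarith)).ne'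
  have hFF0 := hFF ▸ hM
  have hℓℓ0 := hℓℓ ▸ hM
  simp only [ne_eq, mul_eq_zero, not_or] at hFF0 hℓℓ0
  obtain ⟨⟨hF0, -⟩, -⟩ := hFF0
  obtain ⟨⟨h1ℓ, hℓ0⟩, hB, hD⟩ := hℓℓ0
  calc 2 * F / (2 * F + 1) = F * (2 * τ * M / p^2) / (dhdK * M) := by
        rw [two_mul_F_add_one hp0.ne' hF, hdh, add_comm q 1]; field_simp [hτ, hq1.ne']
    _ = F * (h * dFdK * p^2) / (dhdK * M)
        + F * ((1 - τ) * dℓdK * (ℓ + K + 1 - (1 - τ) * N) * (ℓ + K - (1 - τ) * N))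
          / (dhdK * M) := by
        rw [← hcore]; ring
    _ = _ := by
        congr 1
        · rw [← hFF]; field_simp [hF0]
        · rw [← hℓℓ]; field_simp [h1ℓ, hℓ0, hB, hD]
end

section
/- Define g(x) = (1+x)log(1+x) - x·log x with g(0) = 0, and for the additive classical noise channel (τ = 1) with noise K > 0 set η(N) = N + K, p(N) = sqrt((N + η + 1)² - 4N(N+1)), f(N) = (p + η - N - 1)/2, ℓ(N) = (p - η + N - 1)/2, and G(N) = g(η) - g(f) - g(ℓ). Then lim_{N→∞} G(N) = -1 - log K. -/
/-!
For `x > 0` one has `g x = log (1 + x) + x log (1 + 1/x)`, and the second term tends to `1` as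
`x → ∞`. Since `η`, `f` and `ℓ` all tend to infinity, `G = g η - g f - g ℓ` differs from
`log ((1 + η) / ((1 + f) (1 + ℓ)))` by a quantity tending to `1 - 1 - 1 = -1`. Writing
`p² = (K + 1)² + 4 K N` gives `(1 + f)(1 + ℓ) = (2 K N + K + 1 + p) / 2`, and as `p = o(N)` the
ratio inside the logarithm tends to `1 / K`.
-/

open Filter Real Topology

/-- The function `g` of the paper: the entropy (in nats) of a thermal state with mean photon
number `x`. -/
noncomputable def thermalEntropy (x : ℝ) : ℝ := (1 + x) * log (1 + x) - x * log x

lemma thermalEntropy_eq_log_add_mul_log {x : ℝ} (hx : 0 < x) :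
    thermalEntropy x = log (1 + x) + x * log (1 + 1 / x) := by
  rw [thermalEntropy, show 1 + 1 / x = (1 + x) / x by field_simp; ring,
    log_div (by positivity) hx.ne']
  ring

lemma tendsto_thermalEntropy_sub_log_one_add :
    Tendsto (fun x => thermalEntropy x - log (1 + x)) atTop (𝓝 1) := by
  refine (tendsto_mul_log_one_add_div_atTop 1).congr' ?_
  filter_upwards [eventually_gt_atTop 0] with x hx
  rw [thermalEntropy_eq_log_add_mul_log hx]
  ring

lemma tendsto_thermalEntropy_sub_sub {α : Type*} {l : Filter α} {a b c : α → ℝ} {L : ℝ}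
    (ha : Tendsto a l atTop) (hb : Tendsto b l atTop) (hc : Tendsto c l atTop)
    (hlog : Tendsto (fun t => log (1 + a t) - log (1 + b t) - log (1 + c t)) l (𝓝 L)) :
    Tendsto (fun t => thermalEntropy (a t) - thermalEntropy (b t) - thermalEntropy (c t)) l
      (𝓝 (L - 1)) := by
  have h := tendsto_thermalEntropy_sub_log_one_add
  rw [show L - 1 = L + (1 - 1 - 1) by ring]
  refine (hlog.add (((h.comp ha).sub (h.comp hb)).sub (h.comp hc))).congr fun t => ?_
  simp only [Function.comp_apply]
  ring

lemma tendsto_sqrt_affine_atTop (a : ℝ) {b : ℝ} (hb : 0 < b) :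
    Tendsto (fun N => √(a + b * N)) atTop atTop :=
  tendsto_sqrt_atTop.comp (tendsto_atTop_add_const_left _ a (tendsto_id.const_mul_atTop hb))

lemma tendsto_sqrt_affine_div_atTop (a b : ℝ) :
    Tendsto (fun N => √(a + b * N) / N) atTop (𝓝 0) := by
  have h : Tendsto (fun N : ℝ => √(a * (N ^ 2)⁻¹ + b * N⁻¹)) atTop (𝓝 0) := by
    have hcont : Continuous fun s : ℝ => √(a * s ^ 2 + b * s) := by fun_prop
    simpa [Function.comp_def] using (hcont.tendsto 0).comp tendsto_inv_atTop_zero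
  refine h.congr' ?_
  filter_upwards [eventually_gt_atTop 0] with N hN
  rw [show a * (N ^ 2)⁻¹ + b * N⁻¹ = (a + b * N) / N ^ 2 by field_simp,
    sqrt_div' _ (by positivity), sqrt_sq hN.le]

lemma tendsto_log_one_add_channel {K : ℝ} (hK : 0 < K) :
    Tendsto (fun N => log (1 + (N + K)) - log (1 + (√((K + 1) ^ 2 + 4 * K * N) + K - 1) / 2)
      - log (1 + (√((K + 1) ^ 2 + 4 * K * N) - K - 1) / 2)) atTop (𝓝 (-log K)) := by
  set p := fun N => √((K + 1) ^ 2 + 4 * K * N)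
  have hη : Tendsto (fun N => (1 + (N + K)) / N) atTop (𝓝 1) := by
    have h := (tendsto_const_nhds (x := (1 : ℝ))).add
      ((tendsto_const_nhds (x := K + 1)).mul tendsto_inv_atTop_zero)
    rw [mul_zero, add_zero] at h
    refine h.congr' ?_
    filter_upwards [eventually_gt_atTop 0] with N hN
    field_simp
    ring
  have hfℓ : Tendsto (fun N => (1 + (p N + K - 1) / 2) * (1 + (p N - K - 1) / 2) / N) atTop
      (𝓝 K) := by
    have h := (tendsto_const_nhds (x := K)).add
      ((((tendsto_const_nhds (x := K + 1)).mul tendsto_inv_atTop_zero).add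
        (tendsto_sqrt_affine_div_atTop ((K + 1) ^ 2) (4 * K))).div_const 2)
    rw [mul_zero, zero_add, zero_div, add_zero] at h
    refine h.congr' ?_
    filter_upwards [eventually_gt_atTop 0] with N hN
    have hp : p N ^ 2 = (K + 1) ^ 2 + 4 * K * N := sq_sqrt (by positivity)
    rw [eq_div_iff hN.ne']
    linear_combination (-1 / 4) * hp + ((K + 1) / 2 + p N / 2) * inv_mul_cancel₀ hN.ne'
  have h := ((continuousAt_log one_ne_zero).tendsto.comp hη).sub
    ((continuousAt_log hK.ne').tendsto.comp hfℓ)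
  rw [log_one, zero_sub] at h
  refine h.congr' ?_
  filter_upwards [eventually_gt_atTop 0] with N hN
  have hp : K + 1 ≤ p N := le_sqrt_of_sq_le (by nlinarith)
  simp only [Function.comp_apply]
  rw [log_div (by positivity) hN.ne', log_div (by nlinarith) hN.ne',
    log_mul (by linarith) (by linarith)]
  ring

theorem limit_coherent_info_B2 (K : ℝ) (hK : 0 < K) :
    Filter.Tendsto
      (fun N : ℝ =>
        (fun x : ℝ => (1 + x) * Real.log (1 + x) - x * Real.log x) (N + K)
          - (fun x : ℝ => (1 + x) * Real.log (1 + x) - x * Real.log x)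
              ((Real.sqrt ((N + (N + K) + 1)^2 - 4 * N * (N + 1))
                  + (N + K) - N - 1) / 2)
          - (fun x : ℝ => (1 + x) * Real.log (1 + x) - x * Real.log x)
              ((Real.sqrt ((N + (N + K) + 1)^2 - 4 * N * (N + 1))
                  - (N + K) + N - 1) / 2))
      Filter.atTop (nhds (-1 - Real.log K)) := by
  have hpTop := tendsto_sqrt_affine_atTop ((K + 1) ^ 2) (by positivity : 0 < 4 * K)
  have hη : Tendsto (fun N : ℝ => N + K) atTop atTop :=
    tendsto_atTop_add_const_right _ K tendsto_id
  have hf : Tendsto (fun N => (√((K + 1) ^ 2 + 4 * K * N) + K - 1) / 2) atTop atTop :=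
    (tendsto_atTop_add_const_right _ (-1)
      (tendsto_atTop_add_const_right _ K hpTop)).atTop_div_const two_pos
  have hℓ : Tendsto (fun N => (√((K + 1) ^ 2 + 4 * K * N) - K - 1) / 2) atTop atTop :=
    (tendsto_atTop_add_const_right _ (-1)
      (tendsto_atTop_add_const_right _ (-K) hpTop)).atTop_div_const two_pos
  rw [show -1 - log K = -log K - 1 by ring]
  refine (tendsto_thermalEntropy_sub_sub hη hf hℓ (tendsto_log_one_add_channel hK)).congr
    fun N => ?_
  -- `ring_nf` also matches the square roots: `(N + (N + K) + 1)² - 4N(N + 1) = (K + 1)² + 4KN`.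
  simp only [thermalEntropy]
  ring_nf
end
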